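/- Suppose the Lanczos biconjugate A-orthonormalization procedure is run for m steps without breakdown, and suppose the tridiagonal matrix T_m admits an LU decomposition T_m = L_m U_m with L_m unit lower triangular and U_m upper triangular and invertible. Define the primary direction matrix P_m = V_m U_m^{−1} and the dual direction matrix P_m^* = W_m (L_m^T)^{−1}. Then (P_m^*)^T A² P_m = I_m; that is, the pairs of primary and dual direction vectors (the columns p_i of P_m and p_j^* of P_m^*) form a biconjugate A²-orthonormal set: ⟨p_j^*, A² p_i⟩ = δ_{ij} for 1 ≤ i, j ≤ m. -/
import Mathlib


open Matrix

/-- Data of the Lanczos biconjugate A-orthonormalization procedure: the matrix `A`,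
the right and left Lanczos-type vectors `v j`, `w j`, the unnormalized vectors
`vhat j`, `what j`, and the recurrence scalars `alpha`, `beta`, `delta`. -/
structure LanczosData (n : ℕ) where
  A : Matrix (Fin n) (Fin n) ℝ
  v : ℕ → (Fin n → ℝ)
  w : ℕ → (Fin n → ℝ)
  vhat : ℕ → (Fin n → ℝ)
  what : ℕ → (Fin n → ℝ)
  alpha : ℕ → ℝ
  beta : ℕ → ℝ
  delta : ℕ → ℝ

/-- The Lanczos biconjugate A-orthonormalization procedure runs `m` steps without
breakdown: `v 0 = w 0 = 0`, `beta 1 = delta 1 = 0`, `⟨w 1, A v 1⟩ = 1`, and for each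
step `1 ≤ j ≤ m` the recurrence relations hold with
`⟨ŵ_{j+1}, A v̂_{j+1}⟩ ≠ 0` (equivalently `delta (j+1) ≠ 0`). -/
def LanczosData.Runs {n : ℕ} (L : LanczosData n) (m : ℕ) : Prop :=
  L.v 0 = 0 ∧ L.w 0 = 0 ∧ L.beta 1 = 0 ∧ L.delta 1 = 0 ∧
  L.w 1 ⬝ᵥ (L.A *ᵥ L.v 1) = 1 ∧
  ∀ j : ℕ, 1 ≤ j → j ≤ m →
    (L.alpha j = L.w j ⬝ᵥ (L.A *ᵥ (L.A *ᵥ L.v j))) ∧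
    (L.vhat (j + 1) = L.A *ᵥ L.v j - L.alpha j • L.v j - L.beta j • L.v (j - 1)) ∧
    (L.what (j + 1) = (L.A)ᵀ *ᵥ L.w j - L.alpha j • L.w j - L.delta j • L.w (j - 1)) ∧
    (L.delta (j + 1) = Real.sqrt |L.what (j + 1) ⬝ᵥ (L.A *ᵥ L.vhat (j + 1))|) ∧
    (L.beta (j + 1) = (L.what (j + 1) ⬝ᵥ (L.A *ᵥ L.vhat (j + 1))) / L.delta (j + 1)) ∧
    (L.v (j + 1) = (L.delta (j + 1))⁻¹ • L.vhat (j + 1)) ∧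
    (L.w (j + 1) = (L.beta (j + 1))⁻¹ • L.what (j + 1)) ∧
    (L.what (j + 1) ⬝ᵥ (L.A *ᵥ L.vhat (j + 1)) ≠ 0)

/-- `V m` is the `n × m` matrix with columns `v 1, …, v m`. -/
def LanczosData.V {n : ℕ} (L : LanczosData n) (m : ℕ) : Matrix (Fin n) (Fin m) ℝ :=
  Matrix.of fun i k => L.v (k.1 + 1) i

/-- `W m` is the `n × m` matrix with columns `w 1, …, w m`. -/
def LanczosData.W {n : ℕ} (L : LanczosData n) (m : ℕ) : Matrix (Fin n) (Fin m) ℝ :=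
  Matrix.of fun i k => L.w (k.1 + 1) i

/-- `T m` is the `m × m` tridiagonal matrix with diagonal `alpha 1, …, alpha m`,
subdiagonal `delta 2, …, delta m` and superdiagonal `beta 2, …, beta m`. -/
def LanczosData.T {n : ℕ} (L : LanczosData n) (m : ℕ) : Matrix (Fin m) (Fin m) ℝ :=
  Matrix.of fun i j =>
    if i.1 = j.1 then L.alpha (i.1 + 1)
    else if i.1 = j.1 + 1 then L.delta (i.1 + 1)
    else if j.1 = i.1 + 1 then L.beta (j.1 + 1)
    else 0

private def lanczosS {n : ℕ} (L : LanczosData n) (i j : ℕ) : ℝ :=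
  L.w i ⬝ᵥ (L.A *ᵥ L.v j)

private lemma lanczos_WAAV {n m : ℕ} (L : LanczosData n) (hrun : L.Runs m) :
    (L.W m)ᵀ * (L.A * L.A) * L.V m = L.T m := by
  obtain ⟨hv0, hw0, hb1, hd1, hwav, hstep⟩ := hrun
  set S : ℕ → ℕ → ℝ := fun i j => L.w i ⬝ᵥ (L.A *ᵥ L.v j) with hSdef
  have hS0r : ∀ i, S i 0 = 0 := by intro i; simp [hSdef, hv0]
  have hS0l : ∀ j, S 0 j = 0 := by intro j; simp [hSdef, hw0]
  have hδne : ∀ j, 1 ≤ j → j ≤ m → L.delta (j+1) ≠ 0 := by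
    intro j h1 h2
    obtain ⟨-, -, -, hδ, -, -, -, hne⟩ := hstep j h1 h2
    rw [hδ]
    exact ne_of_gt (Real.sqrt_pos.mpr (abs_pos.mpr hne))
  have hβδ : ∀ j, 1 ≤ j → j ≤ m →
      L.beta (j+1) * L.delta (j+1) = L.what (j+1) ⬝ᵥ (L.A *ᵥ L.vhat (j+1)) := by
    intro j h1 h2
    obtain ⟨-, -, -, -, hβ, -, -, -⟩ := hstep j h1 h2
    rw [hβ, div_mul_cancel₀ _ (hδne j h1 h2)]
  have hβne : ∀ j, 1 ≤ j → j ≤ m → L.beta (j+1) ≠ 0 := by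
    intro j h1 h2
    obtain ⟨-, -, -, -, -, -, -, hne⟩ := hstep j h1 h2
    intro h
    apply hne
    rw [← hβδ j h1 h2, h, zero_mul]
  -- unnormalized recurrences in terms of S
  have R1 : ∀ j, 1 ≤ j → j ≤ m → ∀ i,
      L.delta (j+1) * S i (j+1)
        = L.w i ⬝ᵥ (L.A *ᵥ (L.A *ᵥ L.v j)) - L.alpha j * S i j - L.beta j * S i (j-1) := by
    intro j h1 h2 i
    obtain ⟨-, hvhat, -, -, -, hv, -, -⟩ := hstep j h1 h2
    have hδ := hδne j h1 h2
    have : S i (j+1) = (L.delta (j+1))⁻¹ * (L.w i ⬝ᵥ (L.A *ᵥ L.vhat (j+1))) := by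
      simp [hSdef, hv, Matrix.mulVec_smul, dotProduct_smul]
    rw [this, ← mul_assoc, mul_inv_cancel₀ hδ, one_mul, hvhat]
    simp [hSdef, Matrix.mulVec_sub, Matrix.mulVec_smul, dotProduct_sub,
      dotProduct_smul, smul_eq_mul]
  have R2 : ∀ j, 1 ≤ j → j ≤ m → ∀ i,
      L.beta (j+1) * S (j+1) i
        = L.w j ⬝ᵥ (L.A *ᵥ (L.A *ᵥ L.v i)) - L.alpha j * S j i - L.delta j * S (j-1) i := by
    intro j h1 h2 i
    obtain ⟨-, -, hwhat, -, -, -, hw, -⟩ := hstep j h1 h2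
    have hβ := hβne j h1 h2
    have h1' : S (j+1) i = (L.beta (j+1))⁻¹ * (L.what (j+1) ⬝ᵥ (L.A *ᵥ L.v i)) := by
      simp [hSdef, hw, smul_dotProduct]
    have htr : L.w j ⬝ᵥ (L.A *ᵥ (L.A *ᵥ L.v i)) = (L.Aᵀ *ᵥ L.w j) ⬝ᵥ (L.A *ᵥ L.v i) := by
      rw [Matrix.dotProduct_mulVec, ← Matrix.mulVec_transpose]
    rw [h1', ← mul_assoc, mul_inv_cancel₀ hβ, one_mul, hwhat, htr]
    simp only [sub_dotProduct, smul_dotProduct, smul_eq_mul, hSdef]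
  have hdiag : ∀ j, 1 ≤ j → j ≤ m → S (j+1) (j+1) = 1 := by
    intro j h1 h2
    obtain ⟨-, -, -, -, -, hv, hw, hne⟩ := hstep j h1 h2
    have h0 : S (j+1) (j+1)
        = (L.delta (j+1))⁻¹ * ((L.beta (j+1))⁻¹ * (L.what (j+1) ⬝ᵥ (L.A *ᵥ L.vhat (j+1)))) := by
      simp [hSdef, hv, hw, Matrix.mulVec_smul, dotProduct_smul, smul_dotProduct,
        mul_assoc]
    rw [h0, ← mul_assoc, ← mul_inv, mul_comm (L.delta (j+1)) (L.beta (j+1)), ← hβδ j h1 h2]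
    exact inv_mul_cancel₀ (by rw [hβδ j h1 h2]; exact hne)
  -- w-side expansion of w_i ⬝ A² v_j
  have T2w : ∀ i, 1 ≤ i → i ≤ m → ∀ j,
      L.w i ⬝ᵥ (L.A *ᵥ (L.A *ᵥ L.v j))
        = L.beta (i+1) * S (i+1) j + L.alpha i * S i j + L.delta i * S (i-1) j := by
    intro i h1 h2 j
    obtain ⟨-, -, hwhat, -, -, -, hw, -⟩ := hstep i h1 h2
    have hβ := hβne i h1 h2
    have hwh : L.what (i+1) = L.beta (i+1) • L.w (i+1) := by
      rw [hw, smul_smul, mul_inv_cancel₀ hβ, one_smul]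
    have hAT : L.Aᵀ *ᵥ L.w i
        = L.beta (i+1) • L.w (i+1) + L.alpha i • L.w i + L.delta i • L.w (i-1) := by
      rw [← hwh, hwhat]; abel
    have htr : L.w i ⬝ᵥ (L.A *ᵥ (L.A *ᵥ L.v j)) = (L.Aᵀ *ᵥ L.w i) ⬝ᵥ (L.A *ᵥ L.v j) := by
      rw [Matrix.dotProduct_mulVec, ← Matrix.mulVec_transpose]
    rw [htr, hAT]
    simp only [add_dotProduct, smul_dotProduct, smul_eq_mul, hSdef]
  -- the biorthonormality induction
  have key : ∀ k, k ≤ m → ∀ i j, 1 ≤ i → i ≤ k+1 → 1 ≤ j → j ≤ k+1 →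
      S i j = if i = j then 1 else 0 := by
    intro k
    induction k with
    | zero =>
      intro _ i j h1i h2i h1j h2j
      interval_cases i
      interval_cases j
      simpa [hSdef] using hwav
    | succ k ih =>
      intro hk i j h1i h2i h1j h2j
      have hk' : k ≤ m := le_trans (Nat.le_succ k) hk
      have hk1 : 1 ≤ k + 1 := Nat.succ_le_succ (Nat.zero_le k)
      have ihS : ∀ a b, 1 ≤ a → a ≤ k+1 → 1 ≤ b → b ≤ k+1 →
          S a b = if a = b then 1 else 0 := ih hk'
      have ihS' : ∀ a b, a ≤ k+1 → b ≤ k+1 → a ≠ b → S a b = 0 := by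
        intro a b ha hb hab
        rcases Nat.eq_zero_or_pos a with rfl | ha1
        · exact hS0l b
        rcases Nat.eq_zero_or_pos b with rfl | hb1
        · exact hS0r a
        rw [ihS a b ha1 ha hb1 hb, if_neg hab]
      -- new column entries: S i (k+2) = 0 for 1 ≤ i ≤ k+1
      have colnew : ∀ i, 1 ≤ i → i ≤ k+1 → S i (k+2) = 0 := by
        intro i h1 h2
        have hr := R1 (k+1) hk1 hk i
        have hzero : L.w i ⬝ᵥ (L.A *ᵥ (L.A *ᵥ L.v (k+1)))
            - L.alpha (k+1) * S i (k+1) - L.beta (k+1) * S i (k+1-1) = 0 := by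
          rcases eq_or_ne i (k+1) with rfl | hik
          · obtain ⟨hα, -, -, -, -, -, -, -⟩ := hstep (k+1) hk1 hk
            have hs1 : S (k+1) (k+1) = 1 := by
              rw [ihS (k+1) (k+1) hk1 le_rfl hk1 le_rfl, if_pos rfl]
            have hs2 : S (k+1) k = 0 := ihS' (k+1) k le_rfl (Nat.le_succ k) (by omega)
            simp only [Nat.add_sub_cancel, hs1, hs2, mul_one, mul_zero, ← hα]
            ring
          · have him : i ≤ m := le_trans (by omega) hk
            have h1i' : 1 ≤ i := h1
            have hik' : i ≤ k := by omega
            rw [T2w i h1 him (k+1)]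
            have hs1 : S (i+1) (k+1) = if i = k then 1 else 0 := by
              rw [ihS (i+1) (k+1) (by omega) (by omega) hk1 le_rfl]
              by_cases h : i = k <;> simp [h] <;> omega
            have hs2 : S i (k+1) = 0 := ihS' i (k+1) (by omega) le_rfl hik
            have hs3 : L.delta i * S (i-1) (k+1) = 0 := by
              rcases eq_or_ne i 1 with rfl | hi1
              · rw [hd1, zero_mul]
              · rw [ihS' (i-1) (k+1) (by omega) le_rfl (by omega), mul_zero]
            have hs4 : S i (k+1-1) = if i = k then 1 else 0 := by
              simp only [Nat.add_sub_cancel]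
              rcases eq_or_ne i k with rfl | h
              · simp [ihS i i h1 (by omega) h1 (by omega)]
              · simp [ihS' i k (by omega) (by omega) h, h]
            rw [hs1, hs2, hs3, hs4]
            rcases eq_or_ne i k with rfl | h
            · simp
            · simp [h]
        rw [hzero] at hr
        exact (mul_eq_zero.mp hr).resolve_left (hδne (k+1) hk1 hk)
      -- new row entries: S (k+2) j = 0 for 1 ≤ j ≤ k+1
      have rownew : ∀ j, 1 ≤ j → j ≤ k+1 → S (k+2) j = 0 := by
        intro j h1 h2
        have hr := R2 (k+1) hk1 hk j
        have hzero : L.w (k+1) ⬝ᵥ (L.A *ᵥ (L.A *ᵥ L.v j))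
            - L.alpha (k+1) * S (k+1) j - L.delta (k+1) * S (k+1-1) j = 0 := by
          rcases eq_or_ne j (k+1) with rfl | hjk
          · obtain ⟨hα, -, -, -, -, -, -, -⟩ := hstep (k+1) hk1 hk
            have hs1 : S (k+1) (k+1) = 1 := by
              rw [ihS (k+1) (k+1) hk1 le_rfl hk1 le_rfl, if_pos rfl]
            have hs2 : S k (k+1) = 0 := ihS' k (k+1) (Nat.le_succ k) le_rfl (by omega)
            simp only [Nat.add_sub_cancel, hs1, hs2, mul_one, mul_zero, ← hα]
            ring
          · have hjm : j ≤ m := le_trans (by omega) hk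
            have hjk' : j ≤ k := by omega
            have hr1 := R1 j h1 hjm (k+1)
            have hs1 : S (k+1) (j+1) = if j = k then 1 else 0 := by
              rw [ihS (k+1) (j+1) hk1 le_rfl (by omega) (by omega)]
              by_cases h : j = k <;> simp [h] <;> omega
            have hs2 : S (k+1) j = 0 := ihS' (k+1) j le_rfl (by omega) (by omega)
            have hs3 : L.beta j * S (k+1) (j-1) = 0 := by
              rcases eq_or_ne j 1 with rfl | hj1
              · rw [hb1, zero_mul]
              · rw [ihS' (k+1) (j-1) le_rfl (by omega) (by omega), mul_zero]
            have hT2 : L.w (k+1) ⬝ᵥ (L.A *ᵥ (L.A *ᵥ L.v j))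
                = L.delta (j+1) * (if j = k then 1 else 0) := by
              have := hr1
              rw [hs1] at this
              -- R1 : δ(j+1) * S (k+1) (j+1) = T2 - α j * S (k+1) j - β j * S (k+1) (j-1)
              rw [hs2, mul_zero] at hr1
              rw [hs1] at hr1
              have hβ3 := hs3
              linarith [hr1, hβ3]
            have hs4 : S (k+1-1) j = if j = k then 1 else 0 := by
              simp only [Nat.add_sub_cancel]
              rcases eq_or_ne j k with rfl | h
              · simp [ihS j j h1 (by omega) h1 (by omega)]
              · simp [ihS' k j (by omega) (by omega) (fun hh => h hh.symm), h]
            rw [hT2, hs2, hs4]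
            rcases eq_or_ne j k with rfl | h
            · simp
            · simp [h]
        rw [hzero] at hr
        exact (mul_eq_zero.mp hr).resolve_left (hβne (k+1) hk1 hk)
      -- assemble
      rcases eq_or_ne i j with rfl | hij
      · rw [if_pos rfl]
        rcases Nat.lt_or_ge i (k+2) with h | h
        · rw [ihS i i h1i (by omega) h1i (by omega), if_pos rfl]
        · have : i = k + 2 := by omega
          subst this
          exact hdiag (k+1) hk1 hk
      · rw [if_neg hij]
        rcases Nat.lt_or_ge i (k+2) with hi | hi
        · rcases Nat.lt_or_ge j (k+2) with hj | hj
          · exact ihS' i j (by omega) (by omega) hij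
          · have : j = k + 2 := by omega
            subst this
            exact colnew i h1i (by omega)
        · have : i = k + 2 := by omega
          subst this
          exact rownew j h1j (by omega)
  -- matrix identity
  ext i j
  have hjm : (j : ℕ) + 1 ≤ m := j.2
  have him : (i : ℕ) + 1 ≤ m := i.2
  have entry : ((L.W m)ᵀ * (L.A * L.A) * L.V m) i j
      = L.w (i.1+1) ⬝ᵥ (L.A *ᵥ (L.A *ᵥ L.v (j.1+1))) := by
    rw [Matrix.mul_assoc, Matrix.mulVec_mulVec]
    simp only [Matrix.mul_apply, Matrix.transpose_apply, LanczosData.W, LanczosData.V,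
      Matrix.of_apply, Matrix.mulVec, dotProduct, Finset.mul_sum]
  rw [entry]
  have hr1 := R1 (j.1+1) (by omega) hjm (i.1+1)
  have hs1 : S (i.1+1) (j.1+2) = if i.1 = j.1 + 1 then 1 else 0 := by
    rw [key m le_rfl (i.1+1) (j.1+2) (by omega) (by omega) (by omega) (by omega)]
    by_cases h : i.1 = j.1 + 1 <;> simp [h] <;> omega
  have hs2 : S (i.1+1) (j.1+1) = if i.1 = j.1 then 1 else 0 := by
    rw [key m le_rfl (i.1+1) (j.1+1) (by omega) (by omega) (by omega) (by omega)]
    by_cases h : i.1 = j.1 <;> simp [h] <;> omega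
  have hs3 : L.beta (j.1+1) * S (i.1+1) (j.1+1-1)
      = (if j.1 = i.1 + 1 then L.beta (j.1+1) else 0) := by
    simp only [Nat.add_sub_cancel]
    rcases Nat.eq_zero_or_pos j.1 with hj0 | hj0
    · rw [hj0]
      simpa [hj0] using by rw [hb1]; simp
    · rcases eq_or_ne (j.1) (i.1+1) with he | he
      · rw [if_pos he, key m le_rfl (i.1+1) j.1 (by omega) (by omega) (by omega) (by omega),
          if_pos he.symm, mul_one]
      · rw [if_neg he, key m le_rfl (i.1+1) j.1 (by omega) (by omega) (by omega) (by omega),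
          if_neg (fun hh => he hh.symm), mul_zero]
  have hT2 : L.w (i.1+1) ⬝ᵥ (L.A *ᵥ (L.A *ᵥ L.v (j.1+1)))
      = L.delta (j.1+2) * (if i.1 = j.1+1 then 1 else 0)
        + L.alpha (j.1+1) * (if i.1 = j.1 then 1 else 0)
        + (if j.1 = i.1 + 1 then L.beta (j.1+1) else 0) := by
    rw [← hs1, ← hs2, ← hs3]
    linarith [hr1]
  rw [hT2]
  show _ = L.T m i j
  simp only [LanczosData.T, Matrix.of_apply]
  rcases eq_or_ne i.1 j.1 with he | he
  · have h1 : ¬ (i.1 = j.1 + 1) := by omega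
    have h2 : ¬ (j.1 = i.1 + 1) := by omega
    simp only [if_pos he, if_neg h1, if_neg h2, he]
    simp
    try ring
  · simp only [if_neg he]
    rcases eq_or_ne i.1 (j.1+1) with he2 | he2
    · have h2 : ¬ (j.1 = i.1 + 1) := by omega
      simp only [if_pos he2, if_neg h2, he2]
      simp
      intro h
      exfalso
      omega
    · simp only [if_neg he2]
      rcases eq_or_ne j.1 (i.1+1) with he3 | he3
      · simp only [if_pos he3]
        simp
        try ring
      · simp only [if_neg he3]
        simp
        try ring


/-- If `T_m = L_m U_m` with `L_m` unit lower triangular and `U_m` upper triangular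
and invertible, then the primary direction matrix `P_m = V_m U_m⁻¹` and the dual
direction matrix `P_m* = W_m (L_mᵀ)⁻¹` satisfy `(P_m*)ᵀ A² P_m = I_m`: the columns
form a biconjugate A²-orthonormal set. -/
theorem lanczos_directions_A2_biorthonormal {n m : ℕ} (L : LanczosData n)
    (hrun : L.Runs m) (Lm Um : Matrix (Fin m) (Fin m) ℝ)
    (hLU : L.T m = Lm * Um)
    (hLlower : ∀ i j : Fin m, i < j → Lm i j = 0)
    (hLdiag : ∀ i : Fin m, Lm i i = 1)
    (hUupper : ∀ i j : Fin m, j < i → Um i j = 0)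
    (hUinv : IsUnit Um.det) :
    (L.W m * (Lmᵀ)⁻¹)ᵀ * (L.A * L.A) * (L.V m * Um⁻¹) = 1 := by
  have hW : (L.W m)ᵀ * (L.A * L.A) * L.V m = L.T m := lanczos_WAAV L hrun
  have hLdet : Lm.det = 1 := by
    have ht : Lmᵀ.BlockTriangular id := by
      intro a b h
      exact hLlower b a h
    rw [← Matrix.det_transpose Lm, Matrix.det_of_upperTriangular ht]
    simp [Matrix.transpose_apply, hLdiag]
  have hLunit : IsUnit Lm.det := by rw [hLdet]; exact isUnit_one
  have h1 : ((Lmᵀ)⁻¹)ᵀ = Lm⁻¹ := by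
    rw [Matrix.transpose_nonsing_inv, Matrix.transpose_transpose]
  calc (L.W m * (Lmᵀ)⁻¹)ᵀ * (L.A * L.A) * (L.V m * Um⁻¹)
      = Lm⁻¹ * ((L.W m)ᵀ * (L.A * L.A) * L.V m) * Um⁻¹ := by
        rw [Matrix.transpose_mul, h1]
        simp only [Matrix.mul_assoc]
    _ = Lm⁻¹ * (Lm * Um) * Um⁻¹ := by rw [hW, hLU]
    _ = 1 := by
        rw [← Matrix.mul_assoc Lm⁻¹ Lm Um, Matrix.nonsing_inv_mul Lm hLunit, Matrix.one_mul,
          Matrix.mul_nonsing_inv Um hUinv]
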